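/- Let V be a finite-dimensional complex vector space and Z ∈ End(V) a semisimple endomorphism, written Z = Σ_{a=1}^m z_a·P_a where z₁,…,z_m are distinct complex numbers and P₁,…,P_m ∈ End(V) are nonzero projections with P_aP_b = δ_{ab}P_a and P₁+⋯+P_m = id. Let θ₁, θ₂ be real numbers with |θ₁ − θ₂| < π, and let Σ̄ = {s₁e^{iθ₁} + s₂e^{iθ₂} : s₁, s₂ ≥ 0} ∖ {0}. Suppose g ∈ End(V) is invertible and exp(−Z/t)·g·exp(Z/t) → id as t → 0 within H_{θ₁} ∩ H_{θ₂}. Then g − id is nilpotent (so g is unipotent), and the logarithm X = Σ_{n≥1} (−1)^{n−1}(g − id)^n/n (a finite sum) satisfies P_a·X·P_b = 0 for all indices a, b with z_a − z_b ∉ Σ̄; that is, X lies in the span of the eigenspaces of ad(Z) corresponding to eigenvalues lying in Σ̄. -/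

import Mathlib

/-!
Conjugation by `exp (Z / t)` multiplies the block `P a g P b` by `exp ((z b - z a) / t)`.
Convergence to `1` forces the diagonal blocks of `g - 1` to vanish, and an off-diagonal block
`P a g P b ≠ 0` forces `exp ((z b - z a) / t) → 0` along every ray `t = ε t₀`, `ε → 0⁺`, of
`H_{θ₁} ∩ H_{θ₂}`, i.e. `Re (z b / t₀) < Re (z a / t₀)`. So for each such `t₀` the operator
`g - 1` strictly lowers the weight `Re (z / t₀)`: it is nilpotent, and every nonzero block
`P a (g - 1)ⁿ P b` with `n ≥ 1` has `Re ((z a - z b) / t₀) > 0` for all `t₀ ∈ H_{θ₁} ∩ H_{θ₂}`.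
Testing this on `t₀ = exp (i φ)` with `φ` tending to the endpoints of `(θ₂ - π/2, θ₁ + π/2)`
puts `z a - z b` in the sector `Σ̄`.
-/

open Complex Filter Topology

section BlockDecomposition

variable {A ι : Type*} [Ring A] [Fintype ι] {P : ι → A}

namespace CompleteOrthogonalIdempotents

theorem eq_zero_of_forall_mul_mul_eq_zero (hP : CompleteOrthogonalIdempotents P) {x : A}
    (h : ∀ i j, P i * x * P j = 0) : x = 0 := by
  calc x = (∑ i, P i) * x * ∑ j, P j := by rw [hP.complete, one_mul, mul_one]
    _ = 0 := by simp [Finset.sum_mul, Finset.mul_sum, h]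

theorem exists_mul_mul_ne_zero_of_mul_mul_mul_ne_zero (hP : CompleteOrthogonalIdempotents P)
    {x y : A} {i j : ι} (h : P i * (x * y) * P j ≠ 0) :
    ∃ k, P i * x * P k ≠ 0 ∧ P k * y * P j ≠ 0 := by
  have hsplit : P i * (x * y) * P j = ∑ k, (P i * x * P k) * (P k * y * P j) := by
    simp_rw [← mul_assoc, mul_assoc _ (P _) (P _), (hP.idem _).eq, ← Finset.sum_mul,
      ← Finset.mul_sum, hP.complete, mul_one]
  obtain ⟨k, -, hk⟩ := Finset.exists_ne_zero_of_sum_ne_zero (hsplit ▸ h)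
  exact ⟨k, left_ne_zero_of_mul hk, right_ne_zero_of_mul hk⟩

theorem lt_of_mul_pow_mul_ne_zero {α : Type*} [Preorder α] (hP : CompleteOrthogonalIdempotents P)
    {r : ι → α} {x : A} (hx : ∀ i j, P i * x * P j ≠ 0 → r j < r i) {n : ℕ} (hn : 0 < n)
    {i j : ι} (h : P i * x ^ n * P j ≠ 0) : r j < r i := by
  induction n, hn using Nat.le_induction generalizing i with
  | base => exact hx i j (by simpa using h)
  | succ n hn ih =>
    rw [pow_succ'] at h
    obtain ⟨k, hik, hkj⟩ := hP.exists_mul_mul_ne_zero_of_mul_mul_mul_ne_zero h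
    exact (ih hkj).trans (hx i k hik)

theorem pow_card_eq_zero {α : Type*} [Preorder α] (hP : CompleteOrthogonalIdempotents P)
    (r : ι → α) {x : A} (hx : ∀ i j, P i * x * P j ≠ 0 → r j < r i) :
    x ^ Fintype.card ι = 0 := by
  classical
  let below (i : ι) : ℕ := (Finset.univ.filter fun k => r k < r i).card
  have below_lt_card (i : ι) : below i < Fintype.card ι :=
    Finset.card_lt_univ_of_notMem (x := i) (by simp)
  have below_lt {i j : ι} (h : r j < r i) : below j < below i :=
    Finset.card_lt_card <| Finset.ssubset_iff_of_subset (fun k hk => by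
      simp only [Finset.mem_filter, Finset.mem_univ, true_and] at hk ⊢; exact hk.trans h)
      |>.mpr ⟨j, by simpa using h, by simp⟩
  have hbelow : ∀ n i j, P i * x ^ n * P j ≠ 0 → below j + n ≤ below i := by
    intro n
    induction n with
    | zero =>
      intro i j h
      obtain rfl : i = j := by by_contra hij; simp [hP.ortho hij] at h
      simp
    | succ n ih =>
      intro i j h
      rw [pow_succ'] at h
      obtain ⟨k, hik, hkj⟩ := hP.exists_mul_mul_ne_zero_of_mul_mul_mul_ne_zero h
      have := below_lt (hx i k hik)
      have := ih k j hkj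
      omega
  refine hP.eq_zero_of_forall_mul_mul_eq_zero fun i j => ?_
  by_contra h
  have := hbelow _ i j h
  have := below_lt_card i
  omega

end CompleteOrthogonalIdempotents

end BlockDecomposition

theorem OrthogonalIdempotents.mul_sum_smul {R A ι : Type*} [CommSemiring R] [Semiring A]
    [Algebra R A] [Fintype ι] {P : ι → A} (hP : OrthogonalIdempotents P) (c : ι → R) (i : ι) :
    P i * ∑ j, c j • P j = c i • P i := by
  classical
  simp [Finset.mul_sum, hP.mul_eq]

theorem OrthogonalIdempotents.sum_smul_mul {R A ι : Type*} [CommSemiring R] [Semiring A]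
    [Algebra R A] [Fintype ι] {P : ι → A} (hP : OrthogonalIdempotents P) (c : ι → R) (i : ι) :
    (∑ j, c j • P j) * P i = c i • P i := by
  classical
  simp [Finset.sum_mul, hP.mul_eq]

section Exponential

variable {𝔸 : Type*} [NormedRing 𝔸] [NormedAlgebra ℂ 𝔸] [CompleteSpace 𝔸]

theorem mul_exp_eq_exp_smul_of_mul_eq_smul {e x : 𝔸} {c : ℂ} (h : e * x = c • e) :
    e * NormedSpace.exp x = Complex.exp c • e := by
  let +nondep : NormedAlgebra ℚ 𝔸 := .restrictScalars ℚ ℂ 𝔸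
  have : SemiconjBy e x (algebraMap ℂ 𝔸 c) := by
    rw [SemiconjBy, h, Algebra.smul_def, (Algebra.commutes c e)]
  rw [this.exp_right.eq, ← NormedSpace.algebraMap_exp_comm, ← Complex.exp_eq_exp_ℂ,
    Algebra.smul_def]

theorem exp_mul_eq_exp_smul_of_mul_eq_smul {e x : 𝔸} {c : ℂ} (h : x * e = c • e) :
    NormedSpace.exp x * e = Complex.exp c • e := by
  let +nondep : NormedAlgebra ℚ 𝔸 := .restrictScalars ℚ ℂ 𝔸
  have : SemiconjBy e (algebraMap ℂ 𝔸 c) x := by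
    rw [SemiconjBy, h, Algebra.smul_def, (Algebra.commutes c e)]
  rw [← this.exp_right.eq, ← NormedSpace.algebraMap_exp_comm, ← Complex.exp_eq_exp_ℂ,
    Algebra.smul_def, Algebra.commutes]

theorem OrthogonalIdempotents.mul_exp_conj_mul {ι : Type*} [Fintype ι] {P : ι → 𝔸}
    (hP : OrthogonalIdempotents P) (z : ι → ℂ) (s : ℂ) (g : 𝔸) (i j : ι) :
    P i * (NormedSpace.exp ((-s) • ∑ k, z k • P k) * g * NormedSpace.exp (s • ∑ k, z k • P k))
      * P j = Complex.exp (s * (z j - z i)) • (P i * g * P j) := by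
  have hl : P i * NormedSpace.exp ((-s) • ∑ k, z k • P k) = Complex.exp (-s * z i) • P i :=
    mul_exp_eq_exp_smul_of_mul_eq_smul (by rw [mul_smul_comm, hP.mul_sum_smul, smul_smul])
  have hr : NormedSpace.exp (s • ∑ k, z k • P k) * P j = Complex.exp (s * z j) • P j :=
    exp_mul_eq_exp_smul_of_mul_eq_smul (by rw [smul_mul_assoc, hP.sum_smul_mul, smul_smul])
  rw [mul_assoc, mul_assoc, hr, ← mul_assoc, ← mul_assoc, hl, smul_mul_assoc, smul_mul_assoc,
    mul_smul_comm, smul_smul, ← Complex.exp_add]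
  ring_nf

end Exponential

theorem tendsto_ofReal_mul_nhdsWithin_zero {S : Set ℂ} {t : ℂ}
    (hS : ∀ ε : ℝ, 0 < ε → (ε : ℂ) * t ∈ S) :
    Tendsto (fun ε : ℝ => (ε : ℂ) * t) (𝓝[>] 0) (𝓝[S] 0) := by
  refine tendsto_nhdsWithin_iff.mpr ⟨?_, eventually_nhdsWithin_of_forall hS⟩
  have : Tendsto (fun ε : ℝ => (ε : ℂ) * t) (𝓝 0) (𝓝 ((0 : ℝ) * t)) :=
    (continuous_ofReal.mul continuous_const).tendsto 0
  simpa using this.mono_left nhdsWithin_le_nhds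

theorem re_mul_inv_neg_of_tendsto_exp_smul {E : Type*} [NormedAddCommGroup E] [NormedSpace ℂ E]
    {S : Set ℂ} {t : ℂ} (hS : ∀ ε : ℝ, 0 < ε → (ε : ℂ) * t ∈ S) {w : ℂ} {B : E} (hB : B ≠ 0)
    (h : Tendsto (fun s => exp (s⁻¹ * w) • B) (𝓝[S] 0) (𝓝 0)) : (w * t⁻¹).re < 0 := by
  by_contra! hre
  have hray := (h.comp (tendsto_ofReal_mul_nhdsWithin_zero hS)).norm
  rw [norm_zero] at hray
  refine (norm_pos_iff.mpr hB).not_ge (ge_of_tendsto hray ?_)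
  filter_upwards [self_mem_nhdsWithin] with ε (hε : 0 < ε)
  have : ((ε : ℂ) * t)⁻¹ * w = ((ε⁻¹ : ℝ) : ℂ) * (w * t⁻¹) := by push_cast; ring
  rw [Function.comp_apply, this, norm_smul, norm_exp, re_ofReal_mul]
  exact le_mul_of_one_le_left (norm_nonneg B) (Real.one_le_exp (by positivity))

theorem re_mul_inv_lt_of_tendsto_conj {𝔸 : Type*} [NormedRing 𝔸] [NormedAlgebra ℂ 𝔸]
    [CompleteSpace 𝔸] {ι : Type*} [Fintype ι] {P : ι → 𝔸} (hP : CompleteOrthogonalIdempotents P)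
    (z : ι → ℂ) {g : 𝔸} {S : Set ℂ}
    (h : Tendsto (fun t : ℂ => NormedSpace.exp ((-t⁻¹) • ∑ k, z k • P k) * g *
      NormedSpace.exp (t⁻¹ • ∑ k, z k • P k)) (𝓝[S] 0) (𝓝 1))
    {t : ℂ} (hS : ∀ ε : ℝ, 0 < ε → (ε : ℂ) * t ∈ S) {i j : ι} (hij : P i * (g - 1) * P j ≠ 0) :
    (z j * t⁻¹).re < (z i * t⁻¹).re := by
  have hblock : Tendsto (fun s : ℂ => exp (s⁻¹ * (z j - z i)) • (P i * g * P j)) (𝓝[S] 0)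
      (𝓝 (P i * P j)) := by
    have := (tendsto_const_nhds (x := P i)).mul h |>.mul (tendsto_const_nhds (x := P j))
    rw [mul_one] at this
    exact this.congr fun s => hP.mul_exp_conj_mul z s⁻¹ g i j
  by_cases hij' : i = j
  · subst hij'
    have : NeBot (𝓝[S] 0) := (tendsto_ofReal_mul_nhdsWithin_zero hS).neBot
    simp only [sub_self, mul_zero, exp_zero, one_smul] at hblock
    refine absurd ?_ hij
    rw [mul_sub, sub_mul, tendsto_nhds_unique tendsto_const_nhds hblock, mul_one,
      (hP.idem i).eq, sub_self]
  · have hgij : P i * g * P j ≠ 0 := by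
      rwa [mul_sub, sub_mul, mul_one, hP.ortho hij', sub_zero] at hij
    rw [hP.ortho hij'] at hblock
    have := re_mul_inv_neg_of_tendsto_exp_smul hS hgij hblock
    rw [sub_mul, sub_re] at this
    linarith

def halfPlane (θ : ℝ) : Set ℂ := {t | 0 < (t * exp (-(θ : ℂ) * I)).re}

-- `sector θ₁ θ₂ \ {0}` is the set `Σ̄`.
def sector (θ₁ θ₂ : ℝ) : Set ℂ :=
  {w | ∃ s₁ s₂ : ℝ, 0 ≤ s₁ ∧ 0 ≤ s₂ ∧ w = s₁ * exp (θ₁ * I) + s₂ * exp (θ₂ * I)}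

theorem ofReal_mul_mem_halfPlane {θ ε : ℝ} {t : ℂ} (hε : 0 < ε) (ht : t ∈ halfPlane θ) :
    (ε : ℂ) * t ∈ halfPlane θ := by
  simp only [halfPlane, Set.mem_ofPred_eq, mul_assoc, re_ofReal_mul] at ht ⊢
  exact mul_pos hε ht

theorem re_mul_exp_neg_mul_I (w : ℂ) (φ : ℝ) :
    (w * exp (-(φ : ℂ) * I)).re = w.re * Real.cos φ + w.im * Real.sin φ := by
  rw [← ofReal_neg, mul_re, exp_ofReal_mul_I_re, exp_ofReal_mul_I_im, Real.cos_neg,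
    Real.sin_neg]
  ring

theorem exp_mul_I_mem_halfPlane {φ θ : ℝ} (h : |φ - θ| < Real.pi / 2) :
    exp (φ * I) ∈ halfPlane θ := by
  rw [halfPlane, Set.mem_ofPred_eq, re_mul_exp_neg_mul_I, exp_ofReal_mul_I_re,
    exp_ofReal_mul_I_im, ← Real.cos_sub]
  exact Real.cos_pos_of_mem_Ioo ⟨by linarith [neg_abs_le (φ - θ)], (le_abs_self _).trans_lt h⟩

theorem sector_comm (θ₁ θ₂ : ℝ) : sector θ₁ θ₂ = sector θ₂ θ₁ := by
  ext w
  exact ⟨fun ⟨s₁, s₂, h₁, h₂, hw⟩ => ⟨s₂, s₁, h₂, h₁, hw.trans (add_comm _ _)⟩,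
    fun ⟨s₁, s₂, h₁, h₂, hw⟩ => ⟨s₂, s₁, h₂, h₁, hw.trans (add_comm _ _)⟩⟩

theorem im_mul_exp_neg_mul_I (w : ℂ) (φ : ℝ) :
    (w * exp (-(φ : ℂ) * I)).im = w.im * Real.cos φ - w.re * Real.sin φ := by
  rw [← ofReal_neg, mul_im, exp_ofReal_mul_I_re, exp_ofReal_mul_I_im, Real.cos_neg,
    Real.sin_neg]
  ring

theorem mem_sector_of_im_nonneg_of_im_nonpos {θ₁ θ₂ : ℝ} (hle : θ₁ ≤ θ₂)
    (hθ : θ₂ - θ₁ < Real.pi) {w : ℂ} (h₁ : 0 ≤ (w * exp (-(θ₁ : ℂ) * I)).im)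
    (h₂ : (w * exp (-(θ₂ : ℂ) * I)).im ≤ 0)
    (hre : 0 ≤ (w * exp (-(((θ₁ + θ₂) / 2 : ℝ) : ℂ) * I)).re) : w ∈ sector θ₁ θ₂ := by
  rw [im_mul_exp_neg_mul_I] at h₁ h₂
  rw [re_mul_exp_neg_mul_I] at hre
  rcases hle.eq_or_lt with rfl | hlt
  · rw [add_self_div_two] at hre
    refine ⟨_, 0, hre, le_rfl, ?_⟩
    have h0 : w.im * Real.cos θ₁ - w.re * Real.sin θ₁ = 0 := by linarith
    have hpyth := Real.sin_sq_add_cos_sq θ₁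
    apply Complex.ext <;>
      simp only [add_re, add_im, mul_re, mul_im, ofReal_re, ofReal_im, exp_ofReal_mul_I_re,
        exp_ofReal_mul_I_im]
    · linear_combination -Real.sin θ₁ * h0 - w.re * hpyth
    · linear_combination Real.cos θ₁ * h0 - w.im * hpyth
  · have hsin : 0 < Real.sin (θ₂ - θ₁) := Real.sin_pos_of_pos_of_lt_pi (by linarith) hθ
    -- Cramer's rule in the real basis `exp (θ₁ * I)`, `exp (θ₂ * I)` of `ℂ`
    refine ⟨(w.re * Real.sin θ₂ - w.im * Real.cos θ₂) / Real.sin (θ₂ - θ₁),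
      (w.im * Real.cos θ₁ - w.re * Real.sin θ₁) / Real.sin (θ₂ - θ₁),
      div_nonneg (by linarith) hsin.le, div_nonneg h₁ hsin.le, ?_⟩
    rw [Real.sin_sub] at hsin ⊢
    apply Complex.ext <;>
      simp only [add_re, add_im, mul_re, mul_im, ofReal_re, ofReal_im, exp_ofReal_mul_I_re,
        exp_ofReal_mul_I_im] <;>
      field_simp <;>
      ring

theorem mem_sector_of_forall_re_mul_inv_pos {θ₁ θ₂ : ℝ} (hθ : |θ₁ - θ₂| < Real.pi) {w : ℂ}
    (h : ∀ t ∈ halfPlane θ₁ ∩ halfPlane θ₂, 0 < (w * t⁻¹).re) : w ∈ sector θ₁ θ₂ \ {0} := by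
  wlog hle : θ₁ ≤ θ₂ generalizing θ₁ θ₂
  · rw [sector_comm]
    exact this (by rwa [abs_sub_comm]) (fun t ht => h t ht.symm) (by linarith)
  have hθ' : θ₂ - θ₁ < Real.pi := (le_abs_self _).trans_lt (abs_sub_comm θ₁ θ₂ ▸ hθ)
  set f : ℝ → ℝ := fun φ => (w * exp (-(φ : ℂ) * I)).re
  have hpos : ∀ φ ∈ Set.Ioo (θ₂ - Real.pi / 2) (θ₁ + Real.pi / 2), 0 < f φ := by
    rintro φ ⟨h₁, h₂⟩
    have hmem : exp (φ * I) ∈ halfPlane θ₁ ∩ halfPlane θ₂ :=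
      ⟨exp_mul_I_mem_halfPlane (abs_lt.mpr ⟨by linarith, by linarith⟩),
        exp_mul_I_mem_halfPlane (abs_lt.mpr ⟨by linarith, by linarith⟩)⟩
    simpa only [← Complex.exp_neg, ← neg_mul] using h _ hmem
  have hnonneg : ∀ φ ∈ Set.Icc (θ₂ - Real.pi / 2) (θ₁ + Real.pi / 2), 0 ≤ f φ := by
    rw [← closure_Ioo (by linarith)]
    have hclosed : IsClosed {φ | 0 ≤ f φ} := isClosed_le continuous_const (by fun_prop)
    exact hclosed.closure_subset_iff.mpr fun φ hφ => (hpos φ hφ).le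
  refine ⟨mem_sector_of_im_nonneg_of_im_nonpos hle hθ' ?_ ?_
    (hpos _ ⟨by linarith, by linarith⟩).le, ?_⟩
  · have := hnonneg (θ₁ + Real.pi / 2) ⟨by linarith, le_rfl⟩
    simp only [f, re_mul_exp_neg_mul_I, Real.cos_add_pi_div_two, Real.sin_add_pi_div_two] at this
    rw [im_mul_exp_neg_mul_I]
    linarith
  · have := hnonneg (θ₂ - Real.pi / 2) ⟨le_rfl, by linarith⟩
    simp only [f, re_mul_exp_neg_mul_I, Real.cos_sub_pi_div_two, Real.sin_sub_pi_div_two] at this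
    rw [im_mul_exp_neg_mul_I]
    linarith
  · rintro rfl
    simpa [f] using hpos ((θ₁ + θ₂) / 2) ⟨by linarith, by linarith⟩

theorem stmt2_general {V : Type*} [NormedAddCommGroup V] [NormedSpace ℂ V] [FiniteDimensional ℂ V]
    {m : ℕ} (z : Fin m → ℂ)
    (P : Fin m → V →L[ℂ] V)
    (hmul : ∀ a b, P a * P b = if a = b then P a else 0)
    (hsum : ∑ a, P a = 1)
    (Z : V →L[ℂ] V) (hZ : Z = ∑ a, z a • P a)
    (θ₁ θ₂ : ℝ) (hθ : |θ₁ - θ₂| < Real.pi)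
    (g : V →L[ℂ] V)
    (hconv : Tendsto
      (fun t : ℂ => NormedSpace.exp ((-t⁻¹) • Z) * g * NormedSpace.exp (t⁻¹ • Z))
      (𝓝[{t : ℂ | 0 < (t * Complex.exp (-(θ₁ : ℂ) * Complex.I)).re} ∩
          {t : ℂ | 0 < (t * Complex.exp (-(θ₂ : ℂ) * Complex.I)).re}] 0) (𝓝 1)) :
    IsNilpotent (g - 1) ∧
    ∀ N : ℕ, (g - 1) ^ N = 0 →
      ∀ a b, z a - z b ∉ ({w : ℂ | ∃ s₁ s₂ : ℝ, 0 ≤ s₁ ∧ 0 ≤ s₂ ∧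
          w = (s₁ : ℂ) * Complex.exp ((θ₁ : ℂ) * Complex.I)
            + (s₂ : ℂ) * Complex.exp ((θ₂ : ℂ) * Complex.I)} \ {0}) →
        P a * (∑ n ∈ Finset.Ico 1 N, ((-1 : ℂ) ^ (n - 1) / (n : ℂ)) • (g - 1) ^ n) * P b
          = 0 := by
  subst hZ
  have hP : CompleteOrthogonalIdempotents P := ⟨OrthogonalIdempotents.iff_mul_eq.mpr hmul, hsum⟩
  have hdecr : ∀ t ∈ halfPlane θ₁ ∩ halfPlane θ₂,
      ∀ i j, P i * (g - 1) * P j ≠ 0 → (z j * t⁻¹).re < (z i * t⁻¹).re :=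
    fun t ht i j => re_mul_inv_lt_of_tendsto_conj hP z hconv fun ε hε =>
      ⟨ofReal_mul_mem_halfPlane hε ht.1, ofReal_mul_mem_halfPlane hε ht.2⟩
  have hmid : exp (((θ₁ + θ₂) / 2 : ℝ) * I) ∈ halfPlane θ₁ ∩ halfPlane θ₂ := by
    rw [abs_lt] at hθ
    exact ⟨exp_mul_I_mem_halfPlane (abs_lt.mpr ⟨by linarith, by linarith⟩),
      exp_mul_I_mem_halfPlane (abs_lt.mpr ⟨by linarith, by linarith⟩)⟩
  refine ⟨⟨_, hP.pow_card_eq_zero _ (hdecr _ hmid)⟩, fun N _ a b hab => ?_⟩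
  rw [Finset.mul_sum, Finset.sum_mul]
  refine Finset.sum_eq_zero fun n hn => ?_
  have hblock : P a * (g - 1) ^ n * P b = 0 := by
    by_contra hne
    refine hab (mem_sector_of_forall_re_mul_inv_pos hθ fun t ht => ?_)
    have := hP.lt_of_mul_pow_mul_ne_zero (hdecr t ht) (Finset.mem_Ico.mp hn).1 hne
    rwa [sub_mul, sub_re, sub_pos]
  rw [mul_smul_comm, smul_mul_assoc, hblock, smul_zero]

/-- If `Z = Σ z_a • P_a` is a semisimple endomorphism of a finite-dimensional
complex vector space, `g` is invertible, and `exp (-Z/t) g exp (Z/t) → 1` as `t → 0` in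
`H_{θ₁} ∩ H_{θ₂}` (with `|θ₁ - θ₂| < π`), then `g - 1` is nilpotent and the logarithm
`X = Σ_{n ≥ 1} (-1)^{n-1} (g-1)^n / n` (a finite sum) satisfies `P_a X P_b = 0` whenever
`z_a - z_b` does not lie in the closed convex sector bounded by the two rays. -/
theorem stmt2 {V : Type*} [NormedAddCommGroup V] [NormedSpace ℂ V] [FiniteDimensional ℂ V]
    {m : ℕ} (z : Fin m → ℂ) (hz : Function.Injective z)
    (P : Fin m → V →L[ℂ] V) (hPne : ∀ a, P a ≠ 0)
    (hmul : ∀ a b, P a * P b = if a = b then P a else 0)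
    (hsum : ∑ a, P a = 1)
    (Z : V →L[ℂ] V) (hZ : Z = ∑ a, z a • P a)
    (θ₁ θ₂ : ℝ) (hθ : |θ₁ - θ₂| < Real.pi)
    (g : V →L[ℂ] V) (hg : IsUnit g)
    (hconv : Tendsto
      (fun t : ℂ => NormedSpace.exp ((-t⁻¹) • Z) * g * NormedSpace.exp (t⁻¹ • Z))
      (𝓝[{t : ℂ | 0 < (t * Complex.exp (-(θ₁ : ℂ) * Complex.I)).re} ∩
          {t : ℂ | 0 < (t * Complex.exp (-(θ₂ : ℂ) * Complex.I)).re}] 0) (𝓝 1)) :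
    IsNilpotent (g - 1) ∧
    ∀ N : ℕ, (g - 1) ^ N = 0 →
      ∀ a b, z a - z b ∉ ({w : ℂ | ∃ s₁ s₂ : ℝ, 0 ≤ s₁ ∧ 0 ≤ s₂ ∧
          w = (s₁ : ℂ) * Complex.exp ((θ₁ : ℂ) * Complex.I)
            + (s₂ : ℂ) * Complex.exp ((θ₂ : ℂ) * Complex.I)} \ {0}) →
        P a * (∑ n ∈ Finset.Ico 1 N, ((-1 : ℂ) ^ (n - 1) / (n : ℂ)) • (g - 1) ^ n) * P b
          = 0 :=
  stmt2_general z P hmul hsum Z hZ θ₁ θ₂ hθ g hconv
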